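/- arXiv:2510.14538 — 7 statements merged into one kernel-verified Lean document; each statement's English description precedes it below -/
import Mathlib

section
/- Let C, Y be finite nonempty sets, (X, Σ, μ) a probability space, f* : X → Δ_C a measurable map (the ground-truth concept extractor), and β* : Δ_C → Δ_Y any map (the ground-truth inference layer). Suppose there exist p ≠ p' in Δ_C with β*(p) = β*(p'), and that the set A = {x ∈ X : f*(x) = p} has μ(A) > 0. Then there exists a measurable f : X → Δ_C such that β*(f(x)) = β*(f*(x)) for every x ∈ X (so (f, β*) attains maximum likelihood) while μ({x : f(x) ≠ f*(x)}) > 0. In particular, the concept extractor is not identifiable from label supervision when β* is not injective on the relevant subset of Δ_C. -/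
open MeasureTheory
open scoped ENNReal

/-- **Non-identifiability of the concept extractor.** Let `(X, μ)` be a
probability space, `C`, `Y` finite nonempty sets, `f*` a measurable
ground-truth concept extractor valued in distributions over `C`, and `β*` any
inference layer on distributions. If `β*` identifies two distinct
distributions `p ≠ p'` and the set `{x | f* x = p}` has positive measure, then
there is a measurable concept extractor `f` with `β* ∘ f = β* ∘ f*` everywhere
(hence `(f, β*)` attains maximum likelihood) while `f ≠ f*` on a set of
positive measure. -/
theorem concept_extractor_not_identifiable
    {X : Type*} [MeasurableSpace X] (μ : Measure X) [IsProbabilityMeasure μ]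
    {C : Type*} [Fintype C] [Nonempty C]
    {Y : Type*} [Fintype Y] [Nonempty Y]
    (fstar : X → C → ℝ≥0∞) (hfm : Measurable fstar)
    (hf1 : ∀ x, ∑ c, fstar x c = 1)
    (β : (C → ℝ≥0∞) → (Y → ℝ≥0∞))
    (p p' : C → ℝ≥0∞) (hp1 : ∑ c, p c = 1) (hp'1 : ∑ c, p' c = 1)
    (hne : p ≠ p') (hβ : β p = β p')
    (hA : 0 < μ {x | fstar x = p}) :
    ∃ f : X → C → ℝ≥0∞,
      Measurable f ∧ (∀ x, ∑ c, f x c = 1) ∧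
      (∀ x, β (f x) = β (fstar x)) ∧
      0 < μ {x | f x ≠ fstar x} := by
  classical
  have hAset : MeasurableSet {x | fstar x = p} := by
    have : {x | fstar x = p} = fstar ⁻¹' {p} := rfl
    rw [this]
    exact hfm (measurableSet_singleton p)
  refine ⟨fun x => if fstar x = p then p' else fstar x, ?_, ?_, ?_, ?_⟩
  · exact Measurable.ite hAset measurable_const hfm
  · intro x
    by_cases h : fstar x = p
    · simp [h, hp'1]
    · simp [h, hf1 x]
  · intro x
    by_cases h : fstar x = p
    · simp [h, hβ]
    · simp [h]
  · have hsub : {x | fstar x = p} ⊆ {x | (if fstar x = p then p' else fstar x) ≠ fstar x} := by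
      intro x hx
      simp only [Set.mem_setOf_eq] at hx ⊢
      rw [if_pos hx, hx]
      exact fun h => hne h.symm
    calc 0 < μ {x | fstar x = p} := hA
      _ ≤ _ := measure_mono hsub
end

section
/- Let C and Y be finite sets and β* : C → Y a map. Then the number of maps a : C → C satisfying β* ∘ a = β* equals ∏_{y∈Y} n_y^{n_y}, where n_y = |{c ∈ C : β*(c) = y}| and with the convention 0^0 = 1. Consequently, when the ground-truth concepts have full support and the space of concept extractors is unrestricted, the number of deterministic reasoning shortcuts of the NeSy task equals ∏_{y∈Y} n_y^{n_y} − 1, and in particular each label inferable from M distinct concept vectors contributes a multiplicative factor of M^M to the count. -/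
lemma card_remap {C Y : Type*} [Fintype C] [DecidableEq C] [Fintype Y] [DecidableEq Y]
    (β : C → Y) :
    Nat.card {a : C → C // β ∘ a = β} =
      ∏ y : Y, (Finset.univ.filter fun c : C => β c = y).card ^
        (Finset.univ.filter fun c : C => β c = y).card := by
  have e : {a : C → C // β ∘ a = β} ≃ ∀ c : C, {c' : C // β c' = β c} :=
    (Equiv.subtypeEquivRight (by intro a; simp [funext_iff])).trans
      (Equiv.subtypePiEquivPi)
  rw [Nat.card_congr e, Nat.card_pi]
  have h : ∀ c : C, Nat.card {c' : C // β c' = β c} =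
      (Finset.univ.filter fun c' : C => β c' = β c).card := by
    intro c
    rw [Nat.card_eq_fintype_card, Fintype.card_subtype]
  simp_rw [h]
  rw [← Finset.prod_fiberwise_of_maps_to (g := β) (fun c _ => Finset.mem_univ (β c))]
  refine Finset.prod_congr rfl fun y _ => ?_
  rw [Finset.prod_congr rfl (fun c hc => ?_), Finset.prod_const]
  simp only [Finset.mem_filter] at hc
  rw [hc.2]

/-- **Counting deterministic reasoning shortcuts.** For finite sets `C`, `Y`
and a deterministic ground-truth inference layer `β* : C → Y`, the number of
concept remappings `a : C → C` with `β* ∘ a = β*` equals `∏_{y ∈ Y} n_y ^ n_y`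
where `n_y = |{c : β* c = y}|` (with `0^0 = 1`); consequently the number of
deterministic reasoning shortcuts (such maps with `a ≠ id`) equals
`∏_{y ∈ Y} n_y ^ n_y − 1`. -/
theorem card_deterministic_reasoning_shortcuts
    {C Y : Type*} [Fintype C] [DecidableEq C] [Fintype Y] [DecidableEq Y]
    (β : C → Y) :
    Nat.card {a : C → C // β ∘ a = β} =
      ∏ y : Y, (Finset.univ.filter fun c : C => β c = y).card ^
        (Finset.univ.filter fun c : C => β c = y).card ∧
    Nat.card {a : C → C // β ∘ a = β ∧ a ≠ id} =
      (∏ y : Y, (Finset.univ.filter fun c : C => β c = y).card ^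
        (Finset.univ.filter fun c : C => β c = y).card) - 1 := by
  have h1 := card_remap β
  refine ⟨h1, ?_⟩
  rw [← h1]
  classical
  rw [Nat.card_eq_fintype_card, Nat.card_eq_fintype_card,
    Fintype.card_subtype, Fintype.card_subtype]
  have hsub : (Finset.univ.filter fun a : C → C => β ∘ a = β ∧ a ≠ id) =
      (Finset.univ.filter fun a : C → C => β ∘ a = β) \ {id} := by
    ext a
    simp [and_comm]
  rw [hsub, Finset.card_sdiff_of_subset (by simp)]
  simp
end

section
/- Let (X, Σ, μ) be a probability space, C a finite nonempty set, and f* : X → C a measurable map with μ(f*⁻¹{g}) > 0 for every g ∈ C. For a measurable f : X → Δ_C, define the concept remapping distribution α_f : C → Δ_C by α_f(g)(c) = μ(f*⁻¹{g})⁻¹ · ∫_{f*⁻¹{g}} f(x)(c) dμ(x). Then α_f(g) is a point mass for every g ∈ C if and only if there exists a map a : C → C such that f(x) = δ_{a(f*(x))} for μ-almost every x ∈ X; and in that case α_f(g) = δ_{a(g)} for all g ∈ C. In particular, deterministic concept remapping distributions are in one-to-one correspondence (up to μ-null sets) with concept extractors of the form δ∘a∘f*. -/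
open MeasureTheory
open scoped ENNReal

/-- The concept remapping distribution `α_f : C → Δ_C` induced by a concept
extractor `f : X → Δ_C`: `α_f g c` is the conditional expectation of `f x c`
given that the ground-truth concept `f* x` equals `g`. -/
noncomputable def remapDistr {X C : Type*} [MeasurableSpace X]
    (μ : Measure X) (fstar : X → C) (f : X → C → ℝ≥0∞) : C → C → ℝ≥0∞ :=
  fun g c => (μ (fstar ⁻¹' {g}))⁻¹ * ∫⁻ x in fstar ⁻¹' {g}, f x c ∂μ

/-!
If `f = δ_{a ∘ f*}` a.e., then `f` is a.e. constant on each fiber `f*⁻¹{g}` and averaging returns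
that constant. Conversely, if `α_f g = δ_c`, the coordinate `f · c ≤ 1` has average `1` over the
fiber, so it equals `1` a.e. there, and since `f x` is a probability vector, `f x = δ_c`. The
fibers are countably many and cover `X`, so these fiberwise a.e. statements glue.
-/

lemma eq_ite_of_sum_eq_one_of_apply_eq_one {C : Type*} [Fintype C] [DecidableEq C]
    {p : C → ℝ≥0∞} (hp : ∑ c, p c = 1) {c₀ : C} (hc₀ : p c₀ = 1) :
    p = fun c => if c = c₀ then 1 else 0 := by
  funext c
  split_ifs with hc
  · rwa [hc]
  · have hpair : p c + 1 ≤ 1 := by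
      calc p c + 1 = ∑ c' ∈ {c, c₀}, p c' := by rw [Finset.sum_pair hc, hc₀]
        _ ≤ ∑ c', p c' := Finset.sum_le_univ_sum_of_nonneg (fun _ => zero_le)
        _ = 1 := hp
    simpa using ENNReal.le_sub_of_add_le_right ENNReal.one_ne_top hpair

lemma ae_restrict_eq_one_of_setLIntegral_eq_measure {X : Type*} [MeasurableSpace X]
    {μ : Measure X} {s : Set X} {h : X → ℝ≥0∞} (hle : ∀ x, h x ≤ 1) (hs : μ s ≠ ∞)
    (hint : ∫⁻ x in s, h x ∂μ = μ s) : ∀ᵐ x ∂μ.restrict s, h x = 1 :=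
  ae_eq_of_ae_le_of_lintegral_le (Filter.Eventually.of_forall hle) (hint ▸ hs) aemeasurable_const
    (by rw [hint, lintegral_one, Measure.restrict_apply_univ])

section Fibers

variable {X C : Type*} [MeasurableSpace X] {μ : Measure X} {fstar : X → C}

lemma ae_iff_forall_ae_restrict_preimage_singleton [Countable C] [MeasurableSpace C]
    [MeasurableSingletonClass C] (hfstar : Measurable fstar) {p : X → C → Prop} :
    (∀ᵐ x ∂μ, p x (fstar x)) ↔ ∀ g, ∀ᵐ x ∂μ.restrict (fstar ⁻¹' {g}), p x g := by
  have hcover : ⋃ g, fstar ⁻¹' {g} = Set.univ := by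
    rw [← Set.preimage_iUnion, Set.iUnion_of_singleton, Set.preimage_univ]
  conv_lhs => rw [← Measure.restrict_univ (μ := μ), ← hcover, ae_restrict_iUnion_iff]
  refine forall_congr' fun g => ?_
  rw [ae_restrict_iff' (hfstar (measurableSet_singleton g)),
    ae_restrict_iff' (hfstar (measurableSet_singleton g))]
  refine Filter.eventually_congr (Filter.Eventually.of_forall fun x => ?_)
  exact imp_congr_right fun hx => by rw [Set.mem_preimage, Set.mem_singleton_iff] at hx; rw [hx]

lemma remapDistr_eq_of_ae_restrict_eq {f : X → C → ℝ≥0∞} {g : C} {q : C → ℝ≥0∞}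
    (h0 : μ (fstar ⁻¹' {g}) ≠ 0) (htop : μ (fstar ⁻¹' {g}) ≠ ∞)
    (hf : ∀ᵐ x ∂μ.restrict (fstar ⁻¹' {g}), f x = q) :
    remapDistr μ fstar f g = q := by
  funext c
  rw [remapDistr, lintegral_congr_ae (hf.mono fun x hx => congrFun hx c), setLIntegral_const,
    mul_comm (q c), ENNReal.inv_mul_cancel_left h0 htop]

lemma ae_restrict_eq_of_remapDistr_eq_ite [Fintype C] [DecidableEq C] {f : X → C → ℝ≥0∞}
    (hf1 : ∀ x, ∑ c, f x c = 1) {g c₀ : C}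
    (h0 : μ (fstar ⁻¹' {g}) ≠ 0) (htop : μ (fstar ⁻¹' {g}) ≠ ∞)
    (hα : remapDistr μ fstar f g = fun c => if c = c₀ then 1 else 0) :
    ∀ᵐ x ∂μ.restrict (fstar ⁻¹' {g}), f x = fun c => if c = c₀ then 1 else 0 := by
  have hint : ∫⁻ x in fstar ⁻¹' {g}, f x c₀ ∂μ = μ (fstar ⁻¹' {g}) := by
    have hα₀ := congrFun hα c₀
    dsimp only [remapDistr] at hα₀
    rw [if_pos rfl] at hα₀
    rw [← ENNReal.mul_inv_cancel_left h0 htop (b := ∫⁻ x in fstar ⁻¹' {g}, f x c₀ ∂μ), hα₀,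
      mul_one]
  have hle : ∀ x, f x c₀ ≤ 1 := fun x =>
    hf1 x ▸ Finset.single_le_sum (fun _ _ => zero_le) (Finset.mem_univ c₀)
  filter_upwards [ae_restrict_eq_one_of_setLIntegral_eq_measure hle htop hint] with x hx
  exact eq_ite_of_sum_eq_one_of_apply_eq_one (hf1 x) hx

end Fibers

theorem remapDistr_deterministic_iff_general
    {X : Type*} [MeasurableSpace X] (μ : Measure X) [IsProbabilityMeasure μ]
    {C : Type*} [Fintype C] [DecidableEq C]
    [MeasurableSpace C] [MeasurableSingletonClass C]
    (fstar : X → C) (hfstar : Measurable fstar)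
    (hpos : ∀ g : C, 0 < μ (fstar ⁻¹' {g}))
    (f : X → C → ℝ≥0∞)
    (hf1 : ∀ x, ∑ c, f x c = 1) :
    ((∀ g : C, ∃ c : C, remapDistr μ fstar f g = fun c' => if c' = c then 1 else 0) ↔
      (∃ a : C → C, ∀ᵐ x ∂μ, f x = fun c => if c = a (fstar x) then 1 else 0)) ∧
    (∀ a : C → C, (∀ᵐ x ∂μ, f x = fun c => if c = a (fstar x) then 1 else 0) →
      ∀ g : C, remapDistr μ fstar f g = fun c' => if c' = a g then 1 else 0) := by
  have h0 : ∀ g, μ (fstar ⁻¹' {g}) ≠ 0 := fun g => (hpos g).ne'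
  have htop : ∀ g, μ (fstar ⁻¹' {g}) ≠ ∞ := fun g => measure_ne_top μ _
  have remap_of_ae : ∀ a : C → C, (∀ᵐ x ∂μ, f x = fun c => if c = a (fstar x) then 1 else 0) →
      ∀ g, remapDistr μ fstar f g = fun c' => if c' = a g then 1 else 0 := fun a hae g =>
    remapDistr_eq_of_ae_restrict_eq (h0 g) (htop g)
      ((ae_iff_forall_ae_restrict_preimage_singleton hfstar
        (p := fun x g => f x = fun c => if c = a g then 1 else 0)).1 hae g)
  refine ⟨⟨fun hα => ?_, fun ⟨a, hae⟩ g => ⟨a g, remap_of_ae a hae g⟩⟩, remap_of_ae⟩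
  choose a ha using hα
  exact ⟨a, (ae_iff_forall_ae_restrict_preimage_singleton hfstar
    (p := fun x g => f x = fun c => if c = a g then 1 else 0)).2 fun g =>
    ae_restrict_eq_of_remapDistr_eq_ite hf1 (h0 g) (htop g) (ha g)⟩

/-- **Deterministic concept remappings correspond to deterministic concept
extractors.** Let `(X, μ)` be a probability space, `C` finite nonempty, and
`f* : X → C` a measurable ground-truth concept extractor with every fiber of
positive measure. For a measurable `f : X → Δ_C`, the remapping `α_f g` is a
point mass for every `g` iff there is a map `a : C → C` with
`f x = δ_{a (f* x)}` for μ-a.e. `x`; and in that case `α_f g = δ_{a g}` for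
all `g`. -/
theorem remapDistr_deterministic_iff
    {X : Type*} [MeasurableSpace X] (μ : Measure X) [IsProbabilityMeasure μ]
    {C : Type*} [Fintype C] [Nonempty C] [DecidableEq C]
    [MeasurableSpace C] [MeasurableSingletonClass C]
    (fstar : X → C) (hfstar : Measurable fstar)
    (hpos : ∀ g : C, 0 < μ (fstar ⁻¹' {g}))
    (f : X → C → ℝ≥0∞) (hfm : ∀ c, Measurable fun x => f x c)
    (hf1 : ∀ x, ∑ c, f x c = 1) :
    ((∀ g : C, ∃ c : C, remapDistr μ fstar f g = fun c' => if c' = c then 1 else 0) ↔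
      (∃ a : C → C, ∀ᵐ x ∂μ, f x = fun c => if c = a (fstar x) then 1 else 0)) ∧
    (∀ a : C → C, (∀ᵐ x ∂μ, f x = fun c => if c = a (fstar x) then 1 else 0) →
      ∀ g : C, remapDistr μ fstar f g = fun c' => if c' = a g then 1 else 0) :=
  remapDistr_deterministic_iff_general μ fstar hfstar hpos f hf1
end

section
/- Let C, Y be finite nonempty sets, β* : C → Y a map, S ⊆ C nonempty, and β_lin : Δ_C → Δ_Y the marginalization inference layer β_lin(p)(y) = Σ_{c : β*(c)=y} p(c). Suppose α : S → Δ_C satisfies β_lin(α(g)) = δ_{β*(g)} for every g ∈ S. Then there exist finitely many maps a_1, …, a_r : S → C with β*(a_i(g)) = β*(g) for all g ∈ S and i, and weights λ_1, …, λ_r ≥ 0 with Σ_i λ_i = 1, such that α(g) = Σ_i λ_i δ_{a_i(g)} for every g ∈ S. That is, for probabilistic-logic inference layers, every (possibly non-deterministic) reasoning shortcut is a convex combination of deterministic reasoning shortcuts. -/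
open scoped ENNReal

/-!
Choose the concept of every ground-truth concept `g ∈ S` independently according to `α g`.
This product distribution on maps `S → C` has marginal `α g` at `g`, and it only charges optimal
remappings, because `α g` vanishes off the fibre of `β*` over `β* g`.
-/

open Finset

section ProductWeights

variable {ι κ R : Type*} [Fintype ι] [DecidableEq ι] [Fintype κ] [CommSemiring R]

theorem sum_prod_apply_eq_one (w : ι → κ → R) (hw : ∀ i, ∑ k, w i k = 1) :
    ∑ f : ι → κ, ∏ i, w i (f i) = 1 := by
  rw [← Fintype.prod_sum]
  simp [hw]

theorem sum_prod_apply_mul_eval (w : ι → κ → R) (hw : ∀ i, ∑ k, w i k = 1) (i₀ : ι)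
    (φ : κ → R) :
    ∑ f : ι → κ, (∏ i, w i (f i)) * φ (f i₀) = ∑ k, w i₀ k * φ k := by
  let w' : ι → κ → R := fun i k => w i k * if i = i₀ then φ k else 1
  have hprod (f : ι → κ) : ∏ i, w' i (f i) = (∏ i, w i (f i)) * φ (f i₀) := by
    simp only [w', prod_mul_distrib, Fintype.prod_ite_eq']
  calc ∑ f : ι → κ, (∏ i, w i (f i)) * φ (f i₀)
      = ∏ i, ∑ k, w' i k := by simp_rw [Fintype.prod_sum, hprod]
    _ = ∑ k, w i₀ k * φ k := by
      rw [prod_eq_single i₀ (fun i _ hi => by simp [w', hi, hw]) (by simp)]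
      simp [w']

end ProductWeights

theorem nondeterministic_RS_is_mixture_of_deterministic_general
    {C : Type*} [Fintype C] [DecidableEq C]
    {Y : Type*} [DecidableEq Y]
    (βstar : C → Y) (S : Set C)
    (α : S → C → ℝ≥0∞)
    (hα1 : ∀ g : S, ∑ c, α g c = 1)
    (hopt : ∀ g : S, ∀ y : Y,
      (∑ c ∈ Finset.univ.filter fun c : C => βstar c = y, α g c)
        = if y = βstar (g : C) then 1 else 0) :
    ∃ (r : ℕ) (a : Fin r → S → C) (lam : Fin r → ℝ≥0∞),
      (∀ i, ∀ g : S, βstar (a i g) = βstar (g : C)) ∧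
      (∑ i, lam i = 1) ∧
      (∀ g : S, ∀ c : C, α g c = ∑ i, lam i * (if c = a i g then 1 else 0)) := by
  have : Fintype S := Fintype.ofFinite S
  have hfibre (g : S) (c : C) (hc : βstar c ≠ βstar g) : α g c = 0 := by
    have h := hopt g (βstar c)
    rw [if_neg hc, sum_eq_zero_iff] at h
    exact h c (by simp)
  let weight (f : S → C) : ℝ≥0∞ := ∏ g, α g (f g)
  have sum_optimal (F : (S → C) → ℝ≥0∞) :
      ∑ f : {f : S → C // ∀ g, βstar (f g) = βstar g}, weight f * F f = ∑ f, weight f * F f := by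
    rw [← sum_subtype _ mem_filter_univ fun f => weight f * F f, sum_filter_of_ne]
    intro f _ hf g
    by_contra hg
    have hw : weight f = 0 := prod_eq_zero (mem_univ g) (hfibre g (f g) hg)
    exact hf (by rw [hw, zero_mul])
  let e := (Fintype.equivFin {f : S → C // ∀ g, βstar (f g) = βstar g}).symm
  refine ⟨_, fun i => (e i).1, fun i => weight (e i), fun i => (e i).2, ?_, fun g c => ?_⟩
  · simpa [e.sum_comp fun f => weight f] using
      (sum_optimal fun _ => 1).trans (by simpa using sum_prod_apply_eq_one α hα1)
  · rw [e.sum_comp fun f => weight f * if c = f.1 g then 1 else 0,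
      sum_optimal fun f => if c = f g then 1 else 0]
    simpa using (sum_prod_apply_mul_eval α hα1 g fun k => if c = k then 1 else 0).symm

/-- **Every reasoning shortcut of a probabilistic-logic layer is a convex
combination of deterministic ones.** Let `C`, `Y` be finite nonempty sets,
`β* : C → Y`, `S ⊆ C` nonempty, and `β_lin` the marginalization inference
layer `β_lin p y = ∑_{c : β* c = y} p c`. If `α : S → Δ_C` satisfies
`β_lin (α g) = δ_{β* g}` for every `g ∈ S`, then there are finitely many maps
`a_1, …, a_r : S → C` with `β* (a_i g) = β* g` for all `g ∈ S`, and weights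
`λ_i ≥ 0` summing to `1`, such that `α g = ∑_i λ_i δ_{a_i g}` for all
`g ∈ S`. -/
theorem nondeterministic_RS_is_mixture_of_deterministic
    {C : Type*} [Fintype C] [Nonempty C] [DecidableEq C]
    {Y : Type*} [Fintype Y] [Nonempty Y] [DecidableEq Y]
    (βstar : C → Y) (S : Set C) (hS : S.Nonempty)
    (α : S → C → ℝ≥0∞)
    (hα1 : ∀ g : S, ∑ c, α g c = 1)
    (hopt : ∀ g : S, ∀ y : Y,
      (∑ c ∈ Finset.univ.filter fun c : C => βstar c = y, α g c)
        = if y = βstar (g : C) then 1 else 0) :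
    ∃ (r : ℕ) (a : Fin r → S → C) (lam : Fin r → ℝ≥0∞),
      (∀ i, ∀ g : S, βstar (a i g) = βstar (g : C)) ∧
      (∑ i, lam i = 1) ∧
      (∀ g : S, ∀ c : C, α g c = ∑ i, lam i * (if c = a i g then 1 else 0)) :=
  nondeterministic_RS_is_mixture_of_deterministic_general βstar S α hα1 hopt
end

section
/- Let C, Y be finite nonempty sets, (X, Σ, μ) a probability space, f* : X → C measurable (the deterministic ground-truth concept extractor), and β* : C → Y a map (the deterministic ground-truth inference layer). Suppose there exists a label y₀ ∈ Y such that μ({x : β*(f*(x)) = y₀}) > 0 and |{c ∈ C : β*(c) = y₀}| ≥ 2 (equivalently, the knowledge complexity is strictly below |C| − 1). Then there exists a measurable f : X → Δ_C such that (i) β_lin(f(x)) = δ_{β*(f*(x))} for μ-almost every x, so the expected label cross-entropy risk of f is 0, while (ii) μ({x : f(x)(f*(x)) = 0}) > 0, so the expected concept cross-entropy risk −∫_X log f(x)(f*(x)) dμ(x) equals +∞. Hence the reasoning-shortcut risk (concept risk minus label risk) is unbounded. -/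
open MeasureTheory
open scoped ENNReal

/-- **Unbounded reasoning-shortcut risk.** Let `(X, μ)` be a probability
space, `C`, `Y` finite nonempty sets, `f* : X → C` a measurable deterministic
ground-truth concept extractor, and `β* : C → Y` the deterministic
ground-truth inference layer. Suppose a label `y₀` occurs with positive
probability and is inferable from at least two distinct concept vectors
(knowledge complexity strictly below `|C| − 1`). Then there is a measurable
concept extractor `f : X → Δ_C` such that (i) its marginalized label
distribution `β_lin (f x)` equals `δ_{β* (f* x)}` μ-a.e. (zero label risk),
while (ii) `f x (f* x) = 0` on a set of positive measure, so the expected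
concept cross-entropy risk `−∫ log f x (f* x) dμ` is `+∞`: the
reasoning-shortcut risk is unbounded. -/
theorem unbounded_RS_risk
    {X : Type*} [MeasurableSpace X] (μ : Measure X) [IsProbabilityMeasure μ]
    {C : Type*} [Fintype C] [Nonempty C] [DecidableEq C]
    [MeasurableSpace C] [MeasurableSingletonClass C]
    {Y : Type*} [Fintype Y] [Nonempty Y] [DecidableEq Y]
    (fstar : X → C) (hfstar : Measurable fstar)
    (βstar : C → Y)
    (y₀ : Y) (hy₀ : 0 < μ {x | βstar (fstar x) = y₀})
    (htwo : 2 ≤ (Finset.univ.filter fun c : C => βstar c = y₀).card) :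
    ∃ f : X → C → ℝ≥0∞,
      (∀ c, Measurable fun x => f x c) ∧ (∀ x, ∑ c, f x c = 1) ∧
      (∀ᵐ x ∂μ,
        (fun y => ∑ c ∈ Finset.univ.filter fun c : C => βstar c = y, f x c)
          = fun y => if y = βstar (fstar x) then 1 else 0) ∧
      0 < μ {x | f x (fstar x) = 0} ∧
      (∫⁻ x, (if f x (fstar x) = 0 then ⊤
              else ENNReal.ofReal (-Real.log ((f x (fstar x)).toReal))) ∂μ) = ⊤ := by
  obtain ⟨c₁, hc₁, c₂, hc₂, hne⟩ := Finset.one_lt_card.mp htwo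
  simp only [Finset.mem_filter, Finset.mem_univ, true_and] at hc₁ hc₂
  -- h swaps within the fiber of y₀
  set h : C → C := fun c => if βstar c = y₀ then (if c = c₁ then c₂ else c₁) else c with hh
  have hβh : ∀ c, βstar (h c) = βstar c := by
    intro c
    by_cases hc : βstar c = y₀ <;> simp [hh, hc]
    split <;> simp [hc₁, hc₂, hc]
  have hhn : ∀ c, βstar c = y₀ → h c ≠ c := by
    intro c hc
    by_cases hcc : c = c₁
    · subst hcc; simp only [hh, hc, if_true]; simpa using fun H => hne H.symm
    · simp only [hh, hc, if_true, hcc, if_false]; exact fun H => hcc H.symm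
  refine ⟨fun x c => if c = h (fstar x) then 1 else 0, ?_, ?_, ?_, ?_, ?_⟩
  · intro c
    exact (measurable_of_countable (fun c' => if c = h c' then (1:ℝ≥0∞) else 0)).comp hfstar
  · intro x; simp
  · refine Filter.Eventually.of_forall fun x => ?_
    funext y
    rw [Finset.sum_ite_eq' ]
    by_cases hy : y = βstar (fstar x)
    · simp [hy, hβh]
    · have : h (fstar x) ∉ Finset.univ.filter fun c : C => βstar c = y := by
        simp only [Finset.mem_filter, Finset.mem_univ, true_and, hβh]
        exact fun H => hy H.symm
      simp [this, hy]
  · refine lt_of_lt_of_le hy₀ (measure_mono ?_)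
    intro x hx
    simp only [Set.mem_setOf_eq] at hx ⊢
    have := hhn (fstar x) hx
    simp [Ne.symm this]
  · have hs : MeasurableSet {x | βstar (fstar x) = y₀} := by
      have heq : {x | βstar (fstar x) = y₀} = fstar ⁻¹' {c | βstar c = y₀} := by ext x; rfl
      rw [heq]
      exact hfstar ((Set.toFinite {c | βstar c = y₀}).measurableSet)
    refine le_antisymm le_top ?_
    calc (⊤ : ℝ≥0∞) = ⊤ * μ {x | βstar (fstar x) = y₀} := by
          rw [ENNReal.top_mul hy₀.ne']
      _ = ∫⁻ x in {x | βstar (fstar x) = y₀}, ⊤ ∂μ := by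
          rw [setLIntegral_const]
      _ ≤ ∫⁻ x in {x | βstar (fstar x) = y₀}, (if (if fstar x = h (fstar x) then (1:ℝ≥0∞) else 0) = 0 then ⊤ else ENNReal.ofReal (-Real.log (((if fstar x = h (fstar x) then (1:ℝ≥0∞) else 0)).toReal))) ∂μ := by
          refine setLIntegral_mono' hs fun x hx => ?_
          have := hhn (fstar x) hx
          simp [Ne.symm this]
      _ ≤ _ := setLIntegral_le_lintegral _ _
end

section
/- Let C̄ and Y be finite nonempty sets, k ≥ 1, and β* : C̄^k → Y a map that is k-ambiguous, i.e., there exist c ≠ c' in C̄ with β*(c, …, c) = β*(c', …, c'). Let X̄ be a measurable space, ḡ* : X̄ → C̄ measurable (the per-element ground-truth concept), and let μ be any probability measure on X̄^k such that for μ-almost every (x̄_1, …, x̄_k) the ground-truth concepts are all equal and lie in {c, c'}: ḡ*(x̄_1) = ⋯ = ḡ*(x̄_k) ∈ {c, c'}. Define σ : C̄ → C̄ to swap c and c' and fix all other elements, and let f̄ = σ ∘ ḡ*. Then the induced factorized predictor has zero-one label risk μ({x : β*(f̄(x̄_1), …, f̄(x̄_k)) ≠ β*(ḡ*(x̄_1),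 …, ḡ*(x̄_k))}) = 0, while its zero-one concept risk ∫ (1/k) Σ_{j=1}^k 1[f̄(x̄_j) ≠ ḡ*(x̄_j)] dμ = 1. Hence under a k-ambiguous inference layer a concept extractor attaining zero label risk can have maximal concept risk. -/
open MeasureTheory
open scoped ENNReal

/-- The map swapping two concept values `c` and `c'` and fixing all others. -/
def swapConcepts {C : Type*} [DecidableEq C] (c c' : C) : C → C :=
  fun b => if b = c then c' else if b = c' then c else b

/-- **Zero label risk with maximal concept risk under a `k`-ambiguous
inference layer.** Let `C̄`, `Y` be finite nonempty sets, `k ≥ 1`, and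
`β* : C̄^k → Y` `k`-ambiguous: `β* (c,…,c) = β* (c',…,c')` for some `c ≠ c'`.
Let `ḡ* : X̄ → C̄` be the measurable per-element ground-truth concept and `μ`
any probability measure on `X̄^k` under which, almost surely, all `k`
ground-truth concepts are equal and lie in `{c, c'}`. Then the factorized
predictor `f̄ = σ ∘ ḡ*`, where `σ` swaps `c` and `c'`, has zero-one label risk
`0` while its zero-one concept risk equals `1`. -/
theorem ambiguous_zero_label_risk_max_concept_risk
    {Cb : Type*} [Fintype Cb] [Nonempty Cb] [DecidableEq Cb]
    {Y : Type*} [Fintype Y] [Nonempty Y]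
    {k : ℕ} (hk : 1 ≤ k) (β : (Fin k → Cb) → Y)
    (c c' : Cb) (hcc : c ≠ c') (hamb : β (fun _ => c) = β (fun _ => c'))
    {Xb : Type*} [MeasurableSpace Xb]
    (g : Xb → Cb)
    [MeasurableSpace Cb] [MeasurableSingletonClass Cb] (hg : Measurable g)
    (μ : Measure (Fin k → Xb)) [IsProbabilityMeasure μ]
    (hsupp : ∀ᵐ x ∂μ,
      (∀ j : Fin k, g (x j) = g (x ⟨0, hk⟩)) ∧
      (g (x ⟨0, hk⟩) = c ∨ g (x ⟨0, hk⟩) = c')) :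
    μ {x | β (fun j => swapConcepts c c' (g (x j))) ≠ β (fun j => g (x j))} = 0 ∧
    (∫⁻ x, (((Finset.univ.filter
        fun j : Fin k => swapConcepts c c' (g (x j)) ≠ g (x j)).card : ℝ≥0∞) / (k : ℝ≥0∞)) ∂μ)
      = 1 := by

  have key : ∀ x : Fin k → Xb,
      ((∀ j : Fin k, g (x j) = g (x ⟨0, hk⟩)) ∧
        (g (x ⟨0, hk⟩) = c ∨ g (x ⟨0, hk⟩) = c')) →
      (β (fun j => swapConcepts c c' (g (x j))) = β (fun j => g (x j)) ∧
        ∀ j : Fin k, swapConcepts c c' (g (x j)) ≠ g (x j)) := by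
    intro x ⟨h1, h2⟩
    rcases h2 with h | h
    · have hgj : ∀ j, g (x j) = c := fun j => (h1 j).trans h
      constructor
      · have e1 : (fun j => swapConcepts c c' (g (x j))) = fun _ => c' := by
          funext j; simp [hgj j, swapConcepts]
        have e2 : (fun j => g (x j)) = fun _ : Fin k => c := by
          funext j; exact hgj j
        rw [e1, e2, hamb]
      · intro j; rw [hgj j]; simp [swapConcepts]; exact fun hc => (hcc hc.symm).elim
    · have hgj : ∀ j, g (x j) = c' := fun j => (h1 j).trans h
      constructor
      · have e1 : (fun j => swapConcepts c c' (g (x j))) = fun _ => c := by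
          funext j; simp [hgj j, swapConcepts, hcc.symm]
        have e2 : (fun j => g (x j)) = fun _ : Fin k => c' := by
          funext j; exact hgj j
        rw [e1, e2, hamb]
      · intro j; rw [hgj j]; simp [swapConcepts, hcc.symm]; exact hcc
  constructor
  · have : ∀ᵐ x ∂μ, β (fun j => swapConcepts c c' (g (x j))) = β (fun j => g (x j)) :=
      hsupp.mono fun x hx => (key x hx).1
    simpa [ae_iff] using this
  · have heq : ∀ᵐ x ∂μ, (((Finset.univ.filter
        fun j : Fin k => swapConcepts c c' (g (x j)) ≠ g (x j)).card : ℝ≥0∞) / (k : ℝ≥0∞))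
        = 1 := by
      refine hsupp.mono fun x hx => ?_
      have hall := (key x hx).2
      have : (Finset.univ.filter
          fun j : Fin k => swapConcepts c c' (g (x j)) ≠ g (x j)) = Finset.univ := by
        refine Finset.filter_true_of_mem fun j _ => hall j
      rw [this]
      simp only [Finset.card_univ, Fintype.card_fin]
      exact ENNReal.div_self (by exact_mod_cast Nat.one_le_iff_ne_zero.mp hk) (by simp)
    rw [lintegral_congr_ae heq]
    simp
end

section
/- Let C̄ and Y be finite nonempty sets, k ≥ 1, and β* : C̄^k → Y a k-unambiguous map, i.e., β*(c, …, c) ≠ β*(c', …, c') for all c ≠ c' in C̄. Let X̄ be a measurable space, μ̄ a probability measure on X̄, ḡ* : X̄ → C̄ measurable, and equip X̄^k with the product measure μ = μ̄^{⊗k}. For a measurable classifier f̄ : X̄ → C̄, define the zero-one concept risk R_C(f̄) = μ̄({x̄ : f̄(x̄) ≠ ḡ*(x̄)}) and the zero-one label risk R_Y(f̄) = μ({(x̄_1,…,x̄_k) : β*(f̄(x̄_1), …, f̄(x̄_k)) ≠ β*(ḡ*(x̄_1), …, ḡ*(x̄_k))}). Then for every measurable f̄, R_C(f̄) ≤ |C̄|²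 · R_Y(f̄)^{1/k}. In particular R_C(f̄) = O(R_Y(f̄)^{1/k}) as R_Y(f̄) → 0. -/
open MeasureTheory
open scoped ENNReal

/-!
Split the concept errors `{f̄ ≠ ḡ*}` according to the confusion pair `(ḡ* x, f̄ x) = (c, c')`,
`c ≠ c'`: there are fewer than `|C̄|²` such pairs. If all `k` elements of an input fall into
the same confusion cell `{ḡ* = c, f̄ = c'}`, then the predicted and true concept vectors are
the constant vectors `c'` and `c`, and `k`-unambiguity forces a label error. By independence
each cell therefore has measure at most `R_Y(f̄)^{1/k}`.
-/

section

variable {X C : Type*}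

theorem measure_ne_le_sum_offDiag [MeasurableSpace X] [Fintype C] [DecidableEq C] (μ : Measure X)
    (f g : X → C) :
    μ {x | f x ≠ g x} ≤ ∑ p ∈ Finset.univ.offDiag, μ {x | g x = p.1 ∧ f x = p.2} := by
  refine (measure_mono fun x hx => ?_).trans (measure_biUnion_finset_le _ _)
  exact Set.mem_biUnion (x := (g x, f x)) (by simpa using Ne.symm hx) ⟨rfl, rfl⟩

theorem pow_le_measure_pi_of_pi_subset [MeasurableSpace X] (μ : Measure X) [SigmaFinite μ] {k : ℕ}
    {s : Set X} {A : Set (Fin k → X)} (h : Set.univ.pi (fun _ => s) ⊆ A) :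
    μ s ^ k ≤ Measure.pi (fun _ => μ) A :=
  calc μ s ^ k = Measure.pi (fun _ => μ) (Set.univ.pi fun _ => s) := by simp [Measure.pi_pi]
    _ ≤ Measure.pi (fun _ => μ) A := measure_mono h

theorem pi_confusion_subset_label_error {Y : Type*} {k : ℕ} (β : (Fin k → C) → Y)
    (hunamb : ∀ c c' : C, c ≠ c' → β (fun _ => c) ≠ β (fun _ => c')) (f g : X → C)
    {c c' : C} (hcc' : c ≠ c') :
    Set.univ.pi (fun _ => {x | g x = c ∧ f x = c'}) ⊆
      {x : Fin k → X | β (fun j => f (x j)) ≠ β (fun j => g (x j))} := by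
  intro x hx
  have hf : (fun j => f (x j)) = fun _ => c' := funext fun j => (hx j trivial).2
  have hg : (fun j => g (x j)) = fun _ => c := funext fun j => (hx j trivial).1
  simpa [hf, hg] using (hunamb c c' hcc').symm

end

theorem ENNReal.le_rpow_one_div_of_pow_le {a b : ℝ≥0∞} {k : ℕ} (hk : k ≠ 0) (h : a ^ k ≤ b) :
    a ≤ b ^ ((1 : ℝ) / k) := by
  rwa [one_div, ENNReal.le_rpow_inv_iff (by positivity), ENNReal.rpow_natCast]

theorem concept_risk_le_label_risk_rpow_general
    {Cb : Type*} [Fintype Cb]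
    {Y : Type*}
    {k : ℕ} (hk : 1 ≤ k) (β : (Fin k → Cb) → Y)
    (hunamb : ∀ c c' : Cb, c ≠ c' → β (fun _ => c) ≠ β (fun _ => c'))
    {Xb : Type*} [MeasurableSpace Xb]
    (μb : Measure Xb) [IsProbabilityMeasure μb]
    (g : Xb → Cb)
    (f : Xb → Cb) :
    μb {x | f x ≠ g x}
      ≤ (Fintype.card Cb : ℝ≥0∞) ^ 2 *
        ((Measure.pi fun _ : Fin k => μb)
            {x | β (fun j => f (x j)) ≠ β (fun j => g (x j))}) ^ ((1 : ℝ) / k) := by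
  classical
  set RY := (Measure.pi fun _ : Fin k => μb)
    {x | β (fun j => f (x j)) ≠ β (fun j => g (x j))}
  have hcell : ∀ p ∈ (Finset.univ : Finset Cb).offDiag,
      μb {x | g x = p.1 ∧ f x = p.2} ≤ RY ^ ((1 : ℝ) / k) := fun p hp =>
    ENNReal.le_rpow_one_div_of_pow_le (by omega) <| pow_le_measure_pi_of_pi_subset μb <|
      pi_confusion_subset_label_error β hunamb f g (Finset.mem_offDiag.1 hp).2.2
  have hcard : ((Finset.univ : Finset Cb).offDiag.card : ℝ≥0∞) ≤ Fintype.card Cb ^ 2 := by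
    rw [Finset.offDiag_card, Finset.card_univ, sq]
    exact_mod_cast Nat.sub_le _ _
  calc μb {x | f x ≠ g x}
      ≤ ∑ p ∈ Finset.univ.offDiag, μb {x | g x = p.1 ∧ f x = p.2} :=
        measure_ne_le_sum_offDiag μb f g
    _ ≤ ∑ _p ∈ (Finset.univ : Finset Cb).offDiag, RY ^ ((1 : ℝ) / k) := Finset.sum_le_sum hcell
    _ = (Finset.univ : Finset Cb).offDiag.card * RY ^ ((1 : ℝ) / k) := by
        rw [Finset.sum_const, nsmul_eq_mul]
    _ ≤ Fintype.card Cb ^ 2 * RY ^ ((1 : ℝ) / k) := by gcongr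

/-- **Concept risk bound under `k`-unambiguity.** Let `C̄`, `Y` be finite
nonempty sets, `k ≥ 1`, and `β* : C̄^k → Y` `k`-unambiguous
(`β* (c,…,c) ≠ β* (c',…,c')` for all `c ≠ c'`). Let `μ̄` be a probability
measure on `X̄`, `ḡ* : X̄ → C̄` the measurable ground-truth concept, and equip
`X̄^k` with the product measure `μ = μ̄^{⊗k}`. Then for every measurable
classifier `f̄ : X̄ → C̄`, the zero-one concept risk
`R_C(f̄) = μ̄ {x | f̄ x ≠ ḡ* x}` and the zero-one label risk
`R_Y(f̄) = μ {x | β* (f̄ ∘ x) ≠ β* (ḡ* ∘ x)}` satisfy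
`R_C(f̄) ≤ |C̄|² · R_Y(f̄)^{1/k}`. -/
theorem concept_risk_le_label_risk_rpow
    {Cb : Type*} [Fintype Cb] [Nonempty Cb]
    [MeasurableSpace Cb] [MeasurableSingletonClass Cb]
    {Y : Type*} [Fintype Y] [Nonempty Y]
    {k : ℕ} (hk : 1 ≤ k) (β : (Fin k → Cb) → Y)
    (hunamb : ∀ c c' : Cb, c ≠ c' → β (fun _ => c) ≠ β (fun _ => c'))
    {Xb : Type*} [MeasurableSpace Xb]
    (μb : Measure Xb) [IsProbabilityMeasure μb]
    (g : Xb → Cb) (hg : Measurable g)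
    (f : Xb → Cb) (hf : Measurable f) :
    μb {x | f x ≠ g x}
      ≤ (Fintype.card Cb : ℝ≥0∞) ^ 2 *
        ((Measure.pi fun _ : Fin k => μb)
            {x | β (fun j => f (x j)) ≠ β (fun j => g (x j))}) ^ ((1 : ℝ) / k) :=
  concept_risk_le_label_risk_rpow_general hk β hunamb μb g f
end
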